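/- Let k_max be the largest k such that G has a nonempty k-core (a nonempty set C with deg_C(v) >= k for all v in C). Then the optimal density rho(S*) satisfies k_max/2 <= rho(S*) <= k_max; i.e., the main core is a 2-approximation to the densest subgraph in terms of density lower bound, and density cannot exceed the maximal core number. -/

import Mathlib

/-! Summing internal degrees over the core `C0` gives `2 |E(C0)| ≥ kmax |C0|`, and `S*` is at least
as dense as `C0`. Conversely, every vertex of a densest set `S*` has internal degree at least
`ρ(S*)`, because deleting a vertex of smaller degree would raise the density; so `S*` is itself a
`⌈ρ(S*)⌉`-core, and `ρ(S*) ≤ ⌈ρ(S*)⌉ ≤ kmax`. -/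

open Finset

variable {V : Type*} [Fintype V] [DecidableEq V]

/-- Number of edges of `G` with both endpoints in `S`. -/
def edgesIn (G : SimpleGraph V) [DecidableRel G.Adj] (S : Finset V) : ℕ :=
  (G.edgeFinset.filter (fun e => ∀ v ∈ e, v ∈ S)).card

/-- Internal degree of `v` in `S`: the number of neighbors of `v` inside `S`. -/
def degIn (G : SimpleGraph V) [DecidableRel G.Adj] (S : Finset V) (v : V) : ℕ :=
  (G.neighborFinset v ∩ S).card

/-- Density of the subgraph induced by `S`: `|E(S)| / |S|`. -/
def density (G : SimpleGraph V) [DecidableRel G.Adj] (S : Finset V) : ℚ :=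
  (edgesIn G S : ℚ) / (S.card : ℚ)

namespace SimpleGraph

/-- The subgraph of `G` induced on `S`, kept as a graph on all of `V` (vertices outside `S` are
isolated) so that the degree-sum and edge-deletion lemmas for graphs on `V` apply. -/
@[simps]
def inducedOn (G : SimpleGraph V) (S : Finset V) : SimpleGraph V where
  Adj a b := G.Adj a b ∧ a ∈ S ∧ b ∈ S
  symm := ⟨fun _ _ h => ⟨h.1.symm, h.2.2, h.2.1⟩⟩
  loopless := ⟨fun a h => G.loopless.irrefl a h.1⟩

variable (G : SimpleGraph V) [DecidableRel G.Adj] (S : Finset V)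

instance : DecidableRel (G.inducedOn S).Adj :=
  fun a b => inferInstanceAs (Decidable (G.Adj a b ∧ a ∈ S ∧ b ∈ S))

lemma edgesIn_eq_card_edgeFinset_inducedOn : edgesIn G S = #(G.inducedOn S).edgeFinset := by
  unfold edgesIn
  congr 1
  ext e
  induction e with
  | _ a b => simp

lemma degree_inducedOn {v : V} (hv : v ∈ S) : (G.inducedOn S).degree v = degIn G S v := by
  rw [← card_neighborFinset_eq_degree, degIn]
  congr 1
  ext w
  simp [hv]

lemma degree_inducedOn_of_notMem {v : V} (hv : v ∉ S) : (G.inducedOn S).degree v = 0 := by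
  rw [← card_neighborFinset_eq_degree, card_eq_zero]
  ext w
  simp [hv]

lemma sum_degIn_eq_two_mul_edgesIn : ∑ v ∈ S, degIn G S v = 2 * edgesIn G S := by
  rw [edgesIn_eq_card_edgeFinset_inducedOn, ← sum_degrees_eq_twice_card_edges,
    ← sum_subset (subset_univ S) fun v _ hv => G.degree_inducedOn_of_notMem S hv]
  exact sum_congr rfl fun v hv => (G.degree_inducedOn S hv).symm

lemma edgesIn_erase_add_degIn {v : V} (hv : v ∈ S) :
    edgesIn G (S.erase v) + degIn G S v = edgesIn G S := by
  have hdel : (G.inducedOn (S.erase v)).edgeFinset =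
      (G.inducedOn S).edgeFinset \ (G.inducedOn S).incidenceFinset v := by
    ext e
    induction e with
    | _ a b => simp [mk'_mem_incidenceSet_iff]; tauto
  rw [edgesIn_eq_card_edgeFinset_inducedOn, edgesIn_eq_card_edgeFinset_inducedOn, hdel,
    ← G.degree_inducedOn S hv, ← card_incidenceFinset_eq_degree,
    card_sdiff_add_card_eq_card (incidenceFinset_subset _ v)]

@[simp]
lemma edgesIn_empty : edgesIn G ∅ = 0 := by
  rw [edgesIn_eq_card_edgeFinset_inducedOn, card_eq_zero, edgeFinset_eq_empty]
  ext a b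
  simp

lemma half_le_density_of_le_degIn {k : ℕ} (hS : S.Nonempty) (hk : ∀ v ∈ S, k ≤ degIn G S v) :
    (k : ℚ) / 2 ≤ density G S := by
  have hsum : k * #S ≤ 2 * edgesIn G S := by
    rw [← sum_degIn_eq_two_mul_edgesIn, mul_comm, ← smul_eq_mul, ← sum_const]
    exact sum_le_sum hk
  have hcard : (0 : ℚ) < #S := by exact_mod_cast hS.card_pos
  rw [density, div_le_div_iff₀ two_pos hcard, mul_comm _ (2 : ℚ)]
  exact_mod_cast hsum

lemma nonempty_erase_of_degIn_lt_density {v : V} (hv : v ∈ S)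
    (hdeg : (degIn G S v : ℚ) < density G S) : (S.erase v).Nonempty := by
  rw [nonempty_iff_ne_empty]
  intro he
  have hcard : #S = 1 := by
    rw [← card_erase_add_one hv, he, card_empty]
  have hedges : edgesIn G S = degIn G S v := by
    rw [← G.edgesIn_erase_add_degIn S hv, he, edgesIn_empty, zero_add]
  simp [density, hcard, hedges] at hdeg

lemma density_lt_density_erase {v : V} (hv : v ∈ S) (hdeg : (degIn G S v : ℚ) < density G S) :
    density G S < density G (S.erase v) := by
  have hS : (0 : ℚ) < #S := by exact_mod_cast card_pos.mpr ⟨v, hv⟩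
  have hS' : (0 : ℚ) < #(S.erase v) := by
    exact_mod_cast (G.nonempty_erase_of_degIn_lt_density S hv hdeg).card_pos
  have hedges : (edgesIn G (S.erase v) : ℚ) = edgesIn G S - degIn G S v := by
    rw [← G.edgesIn_erase_add_degIn S hv]
    push_cast
    ring
  have hcard : (#(S.erase v) : ℚ) = #S - 1 := by
    rw [card_erase_of_mem hv, Nat.cast_pred (card_pos.mpr ⟨v, hv⟩)]
  rw [density, lt_div_iff₀ hS] at hdeg
  rw [density, density, div_lt_div_iff₀ hS hS', hedges, hcard]
  -- `e (n - 1) < (e - d) n` is `d n < e`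
  nlinarith

lemma density_le_degIn_of_forall_density_le {T : Finset V}
    (hT : ∀ S : Finset V, S.Nonempty → density G S ≤ density G T) {v : V} (hv : v ∈ T) :
    density G T ≤ degIn G T v := by
  by_contra! hdeg
  exact (G.density_lt_density_erase T hv hdeg).not_ge
    (hT _ (G.nonempty_erase_of_degIn_lt_density T hv hdeg))

end SimpleGraph

theorem main_core_two_approximation (G : SimpleGraph V) [DecidableRel G.Adj]
    (kmax : ℕ) (C0 : Finset V) (hC0 : C0.Nonempty)
    (hC0core : ∀ v ∈ C0, kmax ≤ degIn G C0 v)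
    (hkmax : ∀ (k : ℕ) (C : Finset V), C.Nonempty →
      (∀ v ∈ C, k ≤ degIn G C v) → k ≤ kmax)
    (Sstar : Finset V) (hne : Sstar.Nonempty)
    (hmax : ∀ S : Finset V, S.Nonempty → density G S ≤ density G Sstar) :
    (kmax : ℚ) / 2 ≤ density G Sstar ∧ density G Sstar ≤ (kmax : ℚ) := by
  refine ⟨(G.half_le_density_of_le_degIn C0 hC0 hC0core).trans (hmax C0 hC0), ?_⟩
  have hcore : ∀ v ∈ Sstar, ⌈density G Sstar⌉₊ ≤ degIn G Sstar v := fun v hv =>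
    Nat.ceil_le.mpr (G.density_le_degIn_of_forall_density_le hmax hv)
  calc density G Sstar ≤ ⌈density G Sstar⌉₊ := Nat.le_ceil _
    _ ≤ kmax := by exact_mod_cast hkmax _ Sstar hne hcore
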